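/- Let n ≥ 1, let Δ_n = {x ∈ ℝ^n : x_i > 0 for all i and Σ_{i=1}^n x_i < 1}, and let S(ω) = (−i/√(2π))^n Σ_{r=0}^n e^{−i ω_r} / ∏_{r'≠r} (ω_{r'} − ω_r) (with ω_0 = 0), defined on the open set Ω of those ω ∈ ℝ^n whose components are nonzero and pairwise distinct. Suppose f : ℝ^n → ℝ is integrable and satisfies, for Lebesgue-almost every x, f(x) = Σ_{q=1}^Q (w_q ⋅ x)·1_{Δ_n}(A_q x), where A_1, …, A_Q are invertible n×n real matrices and w_1, …, w_Q ∈ ℝ^n. Then for every ω ∈ ℝ^n such that A_q^{−T} ω ∈ Ω for all q, the Fourier transform of f at ω equals Σ_{q=1}^Q |det A_q|^{−1} · i · Σ_{j=1}^n (w_q A_q^{−1})_j · (∂S/∂ω_j)(A_q^{−T} ω), where w_q A_q^{−1} denotes the row vector obtained by right-multiplying w_q (as a row vector) by A_q^{−1} and A_q^{−T} is the inverse transpose of A_q. -/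

import Mathlib

/-!
After the substitution `y = A_q x`, the `q`-th summand contributes `|det A_q|⁻¹` times the
Fourier transform, at `ξ = A_q^{-T} ω`, of `y ↦ (c ⬝ᵥ y) 1_{Δ_n}(y)` with `c = w_q A_q⁻¹`.
Multiplying by the linear form `c ⬝ᵥ y` corresponds to `i` times the derivative in the direction
`c` of the Fourier transform of `1_{Δ_n}`, so it remains to see that this transform is `S` near
`ξ ∈ Ω`. Integrating out one coordinate at a time, the integral of `exp (a ℓ)` over `Δ_n`, for an
affine `ℓ` with distinct values `u_0, …, u_n` at the vertices, obeys the recursion of the divided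
differences of `exp (a ·)` at `u_0, …, u_n`.
-/

open MeasureTheory Matrix

/-- The function `S(ω) = (−i/√(2π))^n Σ_{r=0}^n e^{−i ω_r} / ∏_{r'≠r} (ω_{r'} − ω_r)`,
with `ω_0 = 0` adjoined as the zeroth extended component.  (In Lean, division by zero
is zero, so this formula defines a total function; on the open set `Ω` of frequencies
with nonzero pairwise distinct components it agrees with the intended `S`.) -/
noncomputable def Sfun {n : ℕ} (ω : Fin n → ℝ) : ℂ :=
  (-Complex.I / (Real.sqrt (2 * Real.pi) : ℂ)) ^ n *
    ∑ r : Fin (n + 1),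
      Complex.exp (-Complex.I * ((Matrix.vecCons (0 : ℝ) ω r : ℝ) : ℂ)) /
        ((∏ r' ∈ Finset.univ.erase r,
            (Matrix.vecCons (0 : ℝ) ω r' - Matrix.vecCons (0 : ℝ) ω r) : ℝ) : ℂ)

open Finset

/-- `(-1) ^ (#s - 1)` times the divided difference of `g` at the nodes `u r`, `r ∈ s`; this sign
convention is the one of `Sfun`. -/
noncomputable def divDiff {ι : Type*} [DecidableEq ι] (g : ℝ → ℂ) (s : Finset ι) (u : ι → ℝ) :
    ℂ :=
  ∑ r ∈ s, g (u r) / ((∏ r' ∈ s.erase r, (u r' - u r) : ℝ) : ℂ)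

section DivDiff

variable {ι κ : Type*} [DecidableEq ι] [DecidableEq κ] (g : ℝ → ℂ)

theorem divDiff_map (s : Finset ι) (e : ι ↪ κ) (u : κ → ℝ) :
    divDiff g (s.map e) u = divDiff g s (u ∘ e) := by
  simp only [divDiff, sum_map, ← map_erase, prod_map, Function.comp_apply]

theorem divDiff_comp_succAbove {n : ℕ} (u : Fin (n + 1) → ℝ) (i : Fin (n + 1)) :
    divDiff g univ (u ∘ i.succAbove) = divDiff g (univ.erase i) u := by
  rw [← Fin.coe_succAboveEmb, ← divDiff_map g univ (Fin.succAboveEmb i)]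
  simp [map_eq_image, Fin.image_succAbove_univ, compl_singleton]

theorem divDiff_erase {s : Finset ι} {u : ι → ℝ} (hu : Set.InjOn u s) {x : ι} (hx : x ∈ s) :
    divDiff g (s.erase x) u =
      ∑ r ∈ s, ((u x - u r : ℝ) : ℂ) * (g (u r) / ((∏ r' ∈ s.erase r, (u r' - u r) : ℝ) : ℂ)) := by
  rw [← sum_erase (a := x) _ (by rw [sub_self, Complex.ofReal_zero, zero_mul]), divDiff]
  refine sum_congr rfl fun r hr => ?_
  obtain ⟨hrx, hrs⟩ := mem_erase.1 hr
  have hne : ((u x - u r : ℝ) : ℂ) ≠ 0 := by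
    exact_mod_cast sub_ne_zero.2 fun h => hrx (hu hrs hx h.symm)
  rw [← mul_prod_erase (s.erase r) _ (mem_erase.2 ⟨hrx.symm, hx⟩), erase_right_comm,
    Complex.ofReal_mul, ← mul_div_assoc, mul_div_mul_left _ _ hne]

theorem sub_mul_divDiff {s : Finset ι} {u : ι → ℝ} (hu : Set.InjOn u s) {a b : ι} (ha : a ∈ s)
    (hb : b ∈ s) :
    ((u a - u b : ℝ) : ℂ) * divDiff g s u = divDiff g (s.erase a) u - divDiff g (s.erase b) u := by
  rw [divDiff_erase g hu ha, divDiff_erase g hu hb, ← sum_sub_distrib, divDiff, mul_sum]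
  refine sum_congr rfl fun r _ => ?_
  push_cast
  ring

end DivDiff

def openSimplex (n : ℕ) : Set (Fin n → ℝ) := {y | (∀ i, 0 < y i) ∧ ∑ i, y i < 1}

section Simplex

variable {n : ℕ}

theorem measurableSet_openSimplex : MeasurableSet (openSimplex n) := by
  refine MeasurableSet.inter ?_
    (measurableSet_lt (Finset.measurable_sum _ fun i _ => measurable_pi_apply i) measurable_const)
  exact measurableSet_setOfPred.2 <| Measurable.forall fun i =>
    measurableSet_setOfPred.1 (measurableSet_lt measurable_const (measurable_pi_apply i))

theorem openSimplex_subset_Icc : openSimplex n ⊆ Set.Icc 0 1 := fun y ⟨hpos, hsum⟩ =>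
  ⟨fun i => (hpos i).le, fun i =>
    ((single_le_sum (fun j _ => (hpos j).le) (mem_univ i)).trans hsum.le : y i ≤ 1)⟩

theorem Continuous.integrableOn_openSimplex {E : Type*} [NormedAddCommGroup E]
    {F : (Fin n → ℝ) → E} (hF : Continuous F) : IntegrableOn F (openSimplex n) :=
  hF.integrableOn_Icc.mono_set openSimplex_subset_Icc

theorem integrable_mul_indicator_openSimplex {g : (Fin n → ℝ) → ℝ} (hg : Continuous g) :
    Integrable fun y => g y * (openSimplex n).indicator (fun _ => (1 : ℝ)) y := by
  have : (fun y => g y * (openSimplex n).indicator (fun _ => (1 : ℝ)) y) =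
      (openSimplex n).indicator g := by
    ext y
    simp only [← Set.indicator_mul_right, mul_one]
  rw [this, integrable_indicator_iff measurableSet_openSimplex]
  exact hg.integrableOn_openSimplex

theorem cons_mem_openSimplex_iff {t : ℝ} {y : Fin n → ℝ} :
    Fin.cons t y ∈ openSimplex (n + 1) ↔ y ∈ openSimplex n ∧ t ∈ Set.Ioo 0 (1 - ∑ i, y i) := by
  simp only [openSimplex, Set.mem_ofPred_eq, Fin.forall_fin_succ, Fin.cons_zero, Fin.cons_succ,
    Fin.sum_cons, Set.mem_Ioo]
  constructor
  · rintro ⟨⟨ht, hy⟩, hsum⟩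
    exact ⟨⟨hy, by linarith⟩, ht, by linarith⟩
  · rintro ⟨⟨hy, -⟩, ht, hsum⟩
    exact ⟨⟨ht, hy⟩, by linarith⟩

theorem setIntegral_openSimplex_succ {E : Type*} [NormedAddCommGroup E] [NormedSpace ℝ E]
    {F : (Fin (n + 1) → ℝ) → E} (hF : IntegrableOn F (openSimplex (n + 1))) :
    ∫ y in openSimplex (n + 1), F y =
      ∫ y in openSimplex n, ∫ t in Set.Ioo 0 (1 - ∑ i, y i), F (Fin.cons t y) := by
  have hmp := (volume_preserving_piFinSuccAbove (fun _ : Fin (n + 1) => ℝ) 0).symm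
  set G := (openSimplex (n + 1)).indicator F
  have hG : Integrable (fun p => G ((MeasurableEquiv.piFinSuccAbove (fun _ => ℝ) 0).symm p))
      volume :=
    hmp.integrable_comp_emb (MeasurableEquiv.measurableEmbedding _) |>.2
      ((integrable_indicator_iff measurableSet_openSimplex).2 hF)
  rw [← integral_indicator measurableSet_openSimplex, ← hmp.integral_comp',
    Measure.volume_eq_prod, integral_prod_symm _ hG, ← integral_indicator measurableSet_openSimplex]
  refine integral_congr_ae (ae_of_all _ fun y => ?_)
  simp only [G, MeasurableEquiv.piFinSuccAbove_symm_apply, Fin.insertNthEquiv_zero]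
  change ∫ t, (openSimplex (n + 1)).indicator F (Fin.cons t y) = _
  by_cases hy : y ∈ openSimplex n
  · rw [Set.indicator_of_mem hy, ← integral_indicator measurableSet_Ioo]
    congr 1 with t
    simp only [Set.indicator, cons_mem_openSimplex_iff, hy, true_and]
  · rw [Set.indicator_of_notMem hy, ← integral_zero ℝ E]
    congr 1 with t
    exact Set.indicator_of_notMem (fun h => hy (cons_mem_openSimplex_iff.1 h).1) _

end Simplex

/-- The affine function with the values `u 0, u 1, …, u n` at the vertices `0, e₀, …, e_{n-1}`
of the simplex. -/
def vertexAffine {n : ℕ} (u : Fin (n + 1) → ℝ) (y : Fin n → ℝ) : ℝ :=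
  u 0 * (1 - ∑ i, y i) + ∑ i, u i.succ * y i

section VertexAffine

variable {n : ℕ} (u : Fin (n + 2) → ℝ) (y : Fin n → ℝ)

theorem vertexAffine_cons (t : ℝ) :
    vertexAffine u (Fin.cons t y) = vertexAffine (u ∘ Fin.succAbove 1) y + (u 1 - u 0) * t := by
  simp only [vertexAffine, Fin.sum_univ_succ, Fin.cons_zero, Fin.cons_succ, Function.comp_apply,
    Fin.succ_zero_eq_one, Fin.succAbove_ne_zero_zero one_ne_zero, Fin.one_succAbove_succ]
  ring

theorem vertexAffine_succAbove_one_add :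
    vertexAffine (u ∘ Fin.succAbove 1) y + (u 1 - u 0) * (1 - ∑ i, y i) =
      vertexAffine (u ∘ Fin.succ) y := by
  simp only [vertexAffine, Function.comp_apply, Fin.succAbove_ne_zero_zero one_ne_zero,
    Fin.one_succAbove_succ, Fin.succ_zero_eq_one]
  ring

end VertexAffine

theorem integral_Ioo_cexp_affine {c : ℂ} (hc : c ≠ 0) {d : ℝ} (hd : d ≠ 0) {L : ℝ} (hL : 0 ≤ L)
    (a : ℝ) :
    ∫ t in Set.Ioo 0 L, Complex.exp (c * ↑(a + d * t)) =
      (Complex.exp (c * ↑(a + d * L)) - Complex.exp (c * a)) / (c * d) := by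
  have hsplit (t : ℝ) :
      Complex.exp (c * ↑(a + d * t)) = Complex.exp (c * a) * Complex.exp (c * d * t) := by
    rw [← Complex.exp_add]
    congr 1
    push_cast
    ring
  rw [← integral_Ioc_eq_integral_Ioo, ← intervalIntegral.integral_of_le hL]
  simp only [hsplit, intervalIntegral.integral_const_mul,
    integral_exp_mul_complex (mul_ne_zero hc (Complex.ofReal_ne_zero.2 hd)),
    Complex.ofReal_zero, mul_zero, Complex.exp_zero]
  ring

theorem setIntegral_openSimplex_cexp_vertexAffine {c : ℂ} (hc : c ≠ 0) :
    ∀ {n : ℕ} (u : Fin (n + 1) → ℝ), Function.Injective u →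
      ∫ y in openSimplex n, Complex.exp (c * vertexAffine u y) =
        (-c⁻¹) ^ n * divDiff (fun t => Complex.exp (c * t)) univ u
  | 0, u, _ => by simp [openSimplex, vertexAffine, divDiff, measureReal_def, volume_pi]
  | n + 1, u, hu => by
    set g : ℝ → ℂ := fun t => Complex.exp (c * t)
    have hd : u 1 - u 0 ≠ 0 := sub_ne_zero.2 (hu.ne Fin.zero_ne_one.symm)
    have hcont {m : ℕ} (v : Fin (m + 1) → ℝ) :
        Continuous fun y => Complex.exp (c * vertexAffine v y) := by
      unfold vertexAffine
      fun_prop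
    have hinner : ∀ y ∈ openSimplex n,
        ∫ t in Set.Ioo 0 (1 - ∑ i, y i), Complex.exp (c * vertexAffine u (Fin.cons t y)) =
          (Complex.exp (c * vertexAffine (u ∘ Fin.succ) y) -
            Complex.exp (c * vertexAffine (u ∘ Fin.succAbove 1) y)) / (c * ↑(u 1 - u 0)) := by
      intro y hy
      simp only [vertexAffine_cons, ← vertexAffine_succAbove_one_add]
      exact integral_Ioo_cexp_affine hc hd (by linarith [hy.2]) _
    have hrec := sub_mul_divDiff g hu.injOn (mem_univ 1) (mem_univ 0)
    rw [← divDiff_comp_succAbove, ← divDiff_comp_succAbove, Fin.succAbove_zero] at hrec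
    rw [setIntegral_openSimplex_succ (hcont u).integrableOn_openSimplex,
      setIntegral_congr_fun measurableSet_openSimplex hinner, integral_div,
      integral_sub (hcont _).integrableOn_openSimplex (hcont _).integrableOn_openSimplex,
      setIntegral_openSimplex_cexp_vertexAffine hc _ (hu.comp (Fin.succ_injective _)),
      setIntegral_openSimplex_cexp_vertexAffine hc _ (hu.comp Fin.succAbove_right_injective),
      ← mul_sub, ← neg_sub, ← hrec, pow_succ,
      div_eq_iff (mul_ne_zero hc (Complex.ofReal_ne_zero.2 hd))]
    linear_combination (-c⁻¹) ^ n * (↑(u 1 - u 0) : ℂ) * divDiff g univ u * mul_inv_cancel₀ hc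

section ChangeOfVariables

variable {ι E : Type*} [Fintype ι] [DecidableEq ι] [NormedAddCommGroup E] {M : Matrix ι ι ℝ}

theorem measurableEmbedding_mulVec (hM : M.det ≠ 0) : MeasurableEmbedding (M *ᵥ ·) :=
  ((M.toLinearEquiv' (M.invertibleOfIsUnitDet (Ne.isUnit hM))).toContinuousLinearEquiv
    |>.toHomeomorph.measurableEmbedding)

theorem map_mulVec_volume (hM : M.det ≠ 0) :
    Measure.map (M *ᵥ ·) volume = ENNReal.ofReal |M.det|⁻¹ • volume := by
  rw [← abs_inv]
  exact Real.map_matrix_volume_pi_eq_smul_volume_pi hM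

theorem integral_comp_mulVec [NormedSpace ℝ E] (hM : M.det ≠ 0) (φ : (ι → ℝ) → E) :
    ∫ x, φ (M *ᵥ x) = |M.det|⁻¹ • ∫ y, φ y := by
  rw [← (measurableEmbedding_mulVec hM).integral_map, map_mulVec_volume hM, integral_smul_measure,
    ENNReal.toReal_ofReal (by positivity)]

theorem MeasureTheory.Integrable.comp_mulVec (hM : M.det ≠ 0) {φ : (ι → ℝ) → E}
    (hφ : Integrable φ) : Integrable (fun x => φ (M *ᵥ x)) := by
  refine (measurableEmbedding_mulVec hM).integrable_map_iff.1 ?_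
  rw [map_mulVec_volume hM]
  exact hφ.smul_measure ENNReal.ofReal_ne_top

end ChangeOfVariables

noncomputable def unitaryFourier {n : ℕ} (f : (Fin n → ℝ) → ℂ) (ω : Fin n → ℝ) : ℂ :=
  (1 / (Real.sqrt (2 * Real.pi) : ℂ)) ^ n * ∫ x, f x * Complex.exp (-Complex.I * ↑(x ⬝ᵥ ω))

section UnitaryFourier

variable {n : ℕ}

theorem unitaryFourier_congr_ae {f g : (Fin n → ℝ) → ℂ} (h : f =ᵐ[volume] g) :
    unitaryFourier f = unitaryFourier g := by
  ext ω
  rw [unitaryFourier, unitaryFourier, integral_congr_ae (h.mono fun x hx => by rw [hx])]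

theorem unitaryFourier_const_mul (a : ℂ) (f : (Fin n → ℝ) → ℂ) (ω : Fin n → ℝ) :
    unitaryFourier (fun x => a * f x) ω = a * unitaryFourier f ω := by
  simp only [unitaryFourier, mul_assoc, integral_const_mul]
  ring

theorem MeasureTheory.Integrable.mul_cexp_dotProduct {f : (Fin n → ℝ) → ℂ} (hf : Integrable f)
    (ω : Fin n → ℝ) : Integrable fun x => f x * Complex.exp (-Complex.I * ↑(x ⬝ᵥ ω)) :=
  hf.mul_bdd (c := 1) (by fun_prop) (ae_of_all _ fun x => by
    rw [Complex.norm_exp, neg_mul, Complex.neg_re, Complex.re_mul_ofReal, Complex.I_re]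
    simp)

theorem unitaryFourier_sum {ι : Type*} (s : Finset ι) {f : ι → (Fin n → ℝ) → ℂ}
    (hf : ∀ i ∈ s, Integrable (f i)) (ω : Fin n → ℝ) :
    unitaryFourier (fun x => ∑ i ∈ s, f i x) ω = ∑ i ∈ s, unitaryFourier (f i) ω := by
  simp only [unitaryFourier, sum_mul, ← mul_sum]
  rw [integral_finsetSum s fun i hi => (hf i hi).mul_cexp_dotProduct ω]

theorem unitaryFourier_comp_mulVec {M : Matrix (Fin n) (Fin n) ℝ} (hM : M.det ≠ 0)
    (h : (Fin n → ℝ) → ℂ) (ω : Fin n → ℝ) :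
    unitaryFourier (fun x => h (M *ᵥ x)) ω = |M.det|⁻¹ * unitaryFourier h (M⁻¹ᵀ *ᵥ ω) := by
  have hdot (x : Fin n → ℝ) : M *ᵥ x ⬝ᵥ M⁻¹ᵀ *ᵥ ω = x ⬝ᵥ ω := by
    rw [mulVec_transpose, dotProduct_comm, ← dotProduct_mulVec, mulVec_mulVec,
      nonsing_inv_mul _ (Ne.isUnit hM), one_mulVec, dotProduct_comm]
  simp only [unitaryFourier, ← hdot]
  rw [integral_comp_mulVec hM (fun y => h y * Complex.exp (-Complex.I * ↑(y ⬝ᵥ M⁻¹ᵀ *ᵥ ω))),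
    Complex.real_smul]
  push_cast
  ring

/-- `(2π)⁻¹ (x ⬝ᵥ ω)`, so that Mathlib's character `𝐞 t = exp (2πit)` gives
`𝐞 (-angularPairing n x ω) = exp (-i (x ⬝ᵥ ω))`. -/
noncomputable def angularPairing (n : ℕ) : (Fin n → ℝ) →L[ℝ] (Fin n → ℝ) →L[ℝ] ℝ :=
  (2 * Real.pi)⁻¹ • (dotProductBilin ℝ ℝ).toContinuousBilinearMap

theorem angularPairing_apply (x ω : Fin n → ℝ) :
    angularPairing n x ω = (2 * Real.pi)⁻¹ * (x ⬝ᵥ ω) := by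
  simp [angularPairing]

theorem integral_mul_cexp_eq_fourierIntegral (f : (Fin n → ℝ) → ℂ) (ω : Fin n → ℝ) :
    ∫ x, f x * Complex.exp (-Complex.I * ↑(x ⬝ᵥ ω)) =
      VectorFourier.fourierIntegral Real.fourierChar volume (angularPairing n).toLinearMap₁₂ f
        ω := by
  rw [VectorFourier.fourierIntegral]
  refine integral_congr_ae (ae_of_all _ fun x => ?_)
  dsimp only
  rw [show (angularPairing n).toLinearMap₁₂ x ω = angularPairing n x ω from rfl,
    angularPairing_apply, Circle.smul_def, Real.fourierChar_apply, smul_eq_mul, mul_comm]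
  congr 2
  push_cast
  field_simp

theorem fderiv_unitaryFourier_apply {f : (Fin n → ℝ) → ℂ} (hf : Integrable f)
    (hf' : Integrable fun x => ‖x‖ * ‖f x‖) (ω c : Fin n → ℝ) :
    fderiv ℝ (unitaryFourier f) ω c =
      unitaryFourier (fun x => -Complex.I * ↑(x ⬝ᵥ c) * f x) ω := by
  have hF : unitaryFourier f = fun ω => (1 / (Real.sqrt (2 * Real.pi) : ℂ)) ^ n *
      VectorFourier.fourierIntegral Real.fourierChar volume (angularPairing n).toLinearMap₁₂ f
        ω := by
    ext ω
    rw [unitaryFourier, integral_mul_cexp_eq_fourierIntegral]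
  have hint : Integrable (VectorFourier.fourierSMulRight (angularPairing n) f) :=
    (hf'.const_mul (2 * Real.pi * ‖angularPairing n‖)).mono' hf.1.fourierSMulRight
      (ae_of_all _ fun x => (VectorFourier.norm_fourierSMulRight_le _ f x).trans_eq (by ring))
  rw [hF, fderiv_const_mul (VectorFourier.differentiable_fourierIntegral _ hf hf' ω),
    VectorFourier.fderiv_fourierIntegral _ hf hf', _root_.smul_apply,
    Real.fourierIntegral_continuousLinearMap_apply' hint, unitaryFourier,
    integral_mul_cexp_eq_fourierIntegral, smul_eq_mul]
  congr 2 with x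
  simp only [VectorFourier.fourierSMulRight_apply, angularPairing_apply, Complex.real_smul,
    smul_eq_mul]
  push_cast
  field_simp

end UnitaryFourier

theorem isOpen_setOf_injective {ι X : Type*} [Finite ι] [TopologicalSpace X] [T2Space X] :
    IsOpen {u : ι → X | Function.Injective u} := by
  have : {u : ι → X | Function.Injective u} = ⋂ (i) (j) (_ : i ≠ j), {u | u i ≠ u j} := by
    ext u
    simp only [Set.mem_iInter, Set.mem_ofPred_eq, Function.Injective]
    exact ⟨fun h i j hij hu => hij (h hu), fun h i j hu => by_contra fun hij => h i j hij hu⟩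
  rw [this]
  exact isOpen_iInter_of_finite fun i => isOpen_iInter_of_finite fun j =>
    isOpen_iInter_of_finite fun _ => isOpen_ne_fun (continuous_apply i) (continuous_apply j)

theorem sum_ofReal_mul_apply_single {ι : Type*} [Fintype ι] [DecidableEq ι]
    (ℓ : (ι → ℝ) →L[ℝ] ℂ) (c : ι → ℝ) : ∑ j, (c j : ℂ) * ℓ (Pi.single j 1) = ℓ c := by
  conv_rhs => rw [pi_eq_sum_univ' c]
  simp [Complex.real_smul]

section SimplexFourier

variable {n : ℕ}

theorem Sfun_eq_unitaryFourier_indicator {ξ : Fin n → ℝ}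
    (hξ : Function.Injective (vecCons (0 : ℝ) ξ)) :
    Sfun ξ = unitaryFourier (fun y => (((openSimplex n).indicator (fun _ => 1) y : ℝ) : ℂ)) ξ := by
  have hva (y : Fin n → ℝ) : vertexAffine (vecCons 0 ξ) y = y ⬝ᵥ ξ := by
    simp [vertexAffine, dotProduct, mul_comm]
  have hind : ∫ y, (((openSimplex n).indicator (fun _ => 1) y : ℝ) : ℂ) *
        Complex.exp (-Complex.I * ↑(y ⬝ᵥ ξ)) =
      ∫ y in openSimplex n, Complex.exp (-Complex.I * ↑(vertexAffine (vecCons 0 ξ) y)) := by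
    rw [← integral_indicator measurableSet_openSimplex]
    congr with y
    by_cases hy : y ∈ openSimplex n <;> simp [hy, hva]
  rw [unitaryFourier, hind,
    setIntegral_openSimplex_cexp_vertexAffine (neg_ne_zero.2 Complex.I_ne_zero) _ hξ]
  change (-Complex.I / _) ^ n * divDiff (fun t => Complex.exp (-Complex.I * t)) univ _ = _
  rw [inv_neg, Complex.inv_I, neg_neg, div_eq_mul_one_div, mul_pow]
  ring

theorem unitaryFourier_dotProduct_mul_indicator_openSimplex {ξ : Fin n → ℝ}
    (hξ : Function.Injective (vecCons (0 : ℝ) ξ)) (c : Fin n → ℝ) :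
    unitaryFourier (fun y => ((c ⬝ᵥ y * (openSimplex n).indicator (fun _ => 1) y : ℝ) : ℂ)) ξ =
      Complex.I * fderiv ℝ Sfun ξ c := by
  set χ : (Fin n → ℝ) → ℂ := fun y => (((openSimplex n).indicator (fun _ => 1) y : ℝ) : ℂ)
  have hS : Sfun =ᶠ[nhds ξ] unitaryFourier χ :=
    Filter.eventually_of_mem (isOpen_setOf_injective.preimage
        (continuous_const.matrixVecCons continuous_id) |>.mem_nhds hξ)
      fun _ h => Sfun_eq_unitaryFourier_indicator h
  have hχ : Integrable χ :=
    ((integrable_indicator_iff measurableSet_openSimplex).2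
      continuous_const.integrableOn_openSimplex).ofReal
  have hχ' : Integrable fun y => ‖y‖ * ‖χ y‖ :=
    (integrable_mul_indicator_openSimplex continuous_norm).congr (ae_of_all _ fun y => by
      simp only [χ, Complex.norm_real,
        Real.norm_of_nonneg (Set.indicator_nonneg (fun _ _ => zero_le_one) y)])
  have hlin : (fun y => -Complex.I * ↑(y ⬝ᵥ c) * χ y) =
      fun y => -Complex.I * ((c ⬝ᵥ y * (openSimplex n).indicator (fun _ => 1) y : ℝ) : ℂ) := by
    ext y
    push_cast
    rw [dotProduct_comm]
    ring
  rw [hS.fderiv_eq, fderiv_unitaryFourier_apply hχ hχ' ξ c, hlin, unitaryFourier_const_mul,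
    ← mul_assoc, mul_neg, Complex.I_mul_I, neg_neg, one_mul]

end SimplexFourier

theorem fourier_transform_relu_network_general {n Q : ℕ}
    (A : Fin Q → Matrix (Fin n) (Fin n) ℝ) (hA : ∀ q, IsUnit (A q).det)
    (w : Fin Q → Fin n → ℝ) (f : (Fin n → ℝ) → ℝ)
    (hfae : ∀ᵐ x : Fin n → ℝ, f x =
      ∑ q, (∑ j, w q j * x j) *
        Set.indicator {y : Fin n → ℝ | (∀ i, 0 < y i) ∧ ∑ i, y i < 1}
          (fun _ => (1 : ℝ)) ((A q) *ᵥ x))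
    (ω : Fin n → ℝ)
    (hΩ : ∀ q, Function.Injective (Matrix.vecCons (0 : ℝ) (((A q)⁻¹)ᵀ *ᵥ ω))) :
    (1 / (Real.sqrt (2 * Real.pi) : ℂ)) ^ n *
        ∫ x : Fin n → ℝ, (f x : ℂ) * Complex.exp (-Complex.I * ((∑ i, x i * ω i : ℝ) : ℂ)) =
      ∑ q, ((|(A q).det|⁻¹ : ℝ) : ℂ) * (Complex.I *
        ∑ j, ((Matrix.vecMul (w q) (A q)⁻¹ j : ℝ) : ℂ) *
          fderiv ℝ Sfun (((A q)⁻¹)ᵀ *ᵥ ω) (Pi.single j 1)) := by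
  have hdet (q : Fin Q) : (A q).det ≠ 0 := (hA q).ne_zero
  set h : Fin Q → (Fin n → ℝ) → ℂ := fun q y =>
    ((vecMul (w q) (A q)⁻¹ ⬝ᵥ y * (openSimplex n).indicator (fun _ => 1) y : ℝ) : ℂ)
  have hsum : (fun x => (f x : ℂ)) =ᵐ[volume] fun x => ∑ q, h q (A q *ᵥ x) :=
    hfae.mono fun x hx => by
      simp only [hx, h, Complex.ofReal_sum, ← dotProduct_mulVec, mulVec_mulVec,
        nonsing_inv_mul _ (hA _), one_mulVec]
      rfl
  have hint (q : Fin Q) : Integrable (h q) :=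
    (integrable_mul_indicator_openSimplex (by fun_prop)).ofReal
  change unitaryFourier (fun x => (f x : ℂ)) ω = _
  rw [unitaryFourier_congr_ae hsum,
    unitaryFourier_sum _ fun q _ => (hint q).comp_mulVec (hdet q)]
  refine sum_congr rfl fun q _ => ?_
  rw [unitaryFourier_comp_mulVec (hdet q),
    unitaryFourier_dotProduct_mul_indicator_openSimplex (hΩ q), sum_ofReal_mul_apply_single]

/-- If an integrable `f` agrees almost everywhere with
`x ↦ Σ_q (w_q ⋅ x) · 1_{Δ_n}(A_q x)` for invertible matrices `A_q`, then at every
frequency `ω` with `A_q^{−T} ω ∈ Ω` for all `q` (encoded by injectivity of the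
extension by `ω_0 = 0`), the Fourier transform of `f` equals
`Σ_q |det A_q|⁻¹ · i · Σ_j (w_q A_q⁻¹)_j ∂S/∂ω_j(A_q^{−T} ω)`. -/
theorem fourier_transform_relu_network {n Q : ℕ} (hn : 1 ≤ n)
    (A : Fin Q → Matrix (Fin n) (Fin n) ℝ) (hA : ∀ q, IsUnit (A q).det)
    (w : Fin Q → Fin n → ℝ) (f : (Fin n → ℝ) → ℝ) (hf : Integrable f)
    (hfae : ∀ᵐ x : Fin n → ℝ, f x =
      ∑ q, (∑ j, w q j * x j) *
        Set.indicator {y : Fin n → ℝ | (∀ i, 0 < y i) ∧ ∑ i, y i < 1}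
          (fun _ => (1 : ℝ)) ((A q) *ᵥ x))
    (ω : Fin n → ℝ)
    (hΩ : ∀ q, Function.Injective (Matrix.vecCons (0 : ℝ) (((A q)⁻¹)ᵀ *ᵥ ω))) :
    (1 / (Real.sqrt (2 * Real.pi) : ℂ)) ^ n *
        ∫ x : Fin n → ℝ, (f x : ℂ) * Complex.exp (-Complex.I * ((∑ i, x i * ω i : ℝ) : ℂ)) =
      ∑ q, ((|(A q).det|⁻¹ : ℝ) : ℂ) * (Complex.I *
        ∑ j, ((Matrix.vecMul (w q) (A q)⁻¹ j : ℝ) : ℂ) *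
          fderiv ℝ Sfun (((A q)⁻¹)ᵀ *ᵥ ω) (Pi.single j 1)) :=
  fourier_transform_relu_network_general A hA w f hfae ω hΩ
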